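/- arXiv:2008.09441 — 3 statements merged into one kernel-verified Lean document; each statement's English description precedes it below -/
import Mathlib

section
/- Let h_c = m·h_f with m a positive integer, W_f(ζ) = max(0, 1 - |ζ|/h_f), W_c(ζ) = max(0, 1 - |ζ|/h_c), fine grid points x̃_j = j·h_f (j ∈ ℤ), and coarse grid points x_k = k·h_c. Then for any particle position x_p ∈ ℝ and any coarse grid point x_k: ∑_{j ∈ ℤ} W_c(x_k - x̃_j)·W_f(x̃_j - x_p) = W_c(x_k - x_p). -/
/-!
Write `x_p = s h_f` and `t = fract s`. The fine hat `W_f(x̃_j - x_p)` is nonzero only at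
`j = ⌊s⌋` and `j = ⌊s⌋ + 1`, with weights `1 - t` and `t`, so the two-step deposition is the linear
interpolation of `W_c(x_k - ·)` between two consecutive fine nodes. In units of `h_f` these nodes
are consecutive integers, while the kinks of `W_c(x_k - ·)` lie at the integers `k m`, `k m ± m`;
so `|·|` and `max 0` are both applied to quantities of constant sign along the segment, and the
interpolation is exact.
-/

open Int

/-- `hat 0` is the constant `1`, since `|z| / 0 = 0`. -/
noncomputable def hat (w z : ℝ) : ℝ := max 0 (1 - |z| / w)

section ConvexCombination

variable {𝕜 : Type*} [Field 𝕜] [LinearOrder 𝕜] [IsStrictOrderedRing 𝕜] {x y t : 𝕜}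

theorem abs_convexComb_of_mul_nonneg (hxy : 0 ≤ x * y) (ht0 : 0 ≤ t) (ht1 : t ≤ 1) :
    |(1 - t) * x + t * y| = (1 - t) * |x| + t * |y| := by
  rcases mul_nonneg_iff.mp hxy with ⟨hx, hy⟩ | ⟨hx, hy⟩
  · rw [abs_of_nonneg hx, abs_of_nonneg hy, abs_of_nonneg (by nlinarith)]
  · rw [abs_of_nonpos hx, abs_of_nonpos hy, abs_of_nonpos (by nlinarith)]
    ring

theorem max_zero_convexComb_of_mul_nonneg (hxy : 0 ≤ x * y) (ht0 : 0 ≤ t) (ht1 : t ≤ 1) :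
    max 0 ((1 - t) * x + t * y) = (1 - t) * max 0 x + t * max 0 y := by
  rcases mul_nonneg_iff.mp hxy with ⟨hx, hy⟩ | ⟨hx, hy⟩
  · rw [max_eq_right hx, max_eq_right hy, max_eq_right (by nlinarith)]
  · rw [max_eq_left hx, max_eq_left hy, max_eq_left (by nlinarith)]
    ring

end ConvexCombination

theorem hat_mul_mul {c : ℝ} (hc : 0 < c) (w z : ℝ) : hat (w * c) (z * c) = hat w z := by
  rw [hat, hat, abs_mul, abs_of_pos hc, mul_div_mul_right _ _ hc.ne']

theorem Int.mul_sub_one_nonneg (n : ℤ) : 0 ≤ n * (n - 1) := by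
  rcases le_or_gt n 0 with hn | hn <;> nlinarith

theorem one_sub_abs_div_natCast_mul_nonneg (m : ℕ) (n : ℤ) :
    0 ≤ (1 - |(n : ℝ)| / m) * (1 - |(n : ℝ) - 1| / m) := by
  rcases m.eq_zero_or_pos with rfl | hm
  · simp
  have hm' : (0 : ℝ) < m := by exact_mod_cast hm
  -- `|n|` and `|n - 1|` are integers at distance at most one, so they lie on the same side of `m`
  have hside : (|n| ≤ m ∧ |n - 1| ≤ m) ∨ (m ≤ |n| ∧ m ≤ |n - 1|) := by
    rcases abs_cases n with ⟨h, _⟩ | ⟨h, _⟩ <;> rcases abs_cases (n - 1) with ⟨h', _⟩ | ⟨h', _⟩ <;>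
      omega
  rcases hside with ⟨h₀, h₁⟩ | ⟨h₀, h₁⟩
  · apply mul_nonneg <;> rw [sub_nonneg, div_le_one hm'] <;> exact_mod_cast ‹_›
  · apply mul_nonneg_of_nonpos_of_nonpos <;> rw [sub_nonpos, one_le_div hm'] <;> exact_mod_cast ‹_›

theorem hat_natCast_intCast_sub (m : ℕ) (n : ℤ) {t : ℝ} (ht0 : 0 ≤ t) (ht1 : t ≤ 1) :
    hat m (n - t) = (1 - t) * hat m n + t * hat m (n - 1) := by
  have hcomb : (n : ℝ) - t = (1 - t) * n + t * (n - 1) := by ring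
  have habs : |(n : ℝ) - t| = (1 - t) * |(n : ℝ)| + t * |(n : ℝ) - 1| := by
    rw [hcomb, abs_convexComb_of_mul_nonneg (by exact_mod_cast n.mul_sub_one_nonneg) ht0 ht1]
  rw [hat, hat, hat, ← max_zero_convexComb_of_mul_nonneg
    (one_sub_abs_div_natCast_mul_nonneg m n) ht0 ht1, habs]
  ring_nf

theorem hat_one_floor_sub (s : ℝ) : hat 1 (⌊s⌋ - s) = 1 - fract s := by
  have h : (⌊s⌋ : ℝ) - s = -fract s := by rw [Int.fract]; ring
  rw [hat, h, abs_neg, abs_of_nonneg (fract_nonneg s), div_one,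
    max_eq_right (sub_nonneg.mpr (fract_lt_one s).le)]

theorem hat_one_floor_add_one_sub (s : ℝ) : hat 1 (⌊s⌋ + 1 - s) = fract s := by
  have h : (⌊s⌋ : ℝ) + 1 - s = 1 - fract s := by rw [Int.fract]; ring
  rw [hat, h, abs_of_nonneg (sub_nonneg.mpr (fract_lt_one s).le), div_one, sub_sub_cancel,
    max_eq_right (fract_nonneg s)]

theorem hat_one_intCast_sub_eq_zero {s : ℝ} {j : ℤ} (h₀ : j ≠ ⌊s⌋) (h₁ : j ≠ ⌊s⌋ + 1) :
    hat 1 (j - s) = 0 := by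
  have hfar : 1 ≤ |(j : ℝ) - s| := by
    rcases lt_or_gt_of_ne h₀ with hj | hj
    · have hj' : (j : ℝ) + 1 ≤ ⌊s⌋ := by exact_mod_cast hj
      rw [abs_of_neg (by linarith [floor_le s])]
      linarith [floor_le s]
    · have hj' : (⌊s⌋ : ℝ) + 2 ≤ j := by exact_mod_cast (by omega : ⌊s⌋ + 2 ≤ j)
      rw [abs_of_pos (by linarith [lt_floor_add_one s])]
      linarith [lt_floor_add_one s]
  rw [hat, div_one, max_eq_left (sub_nonpos.mpr hfar)]

theorem tsum_mul_hat_one_intCast_sub (g : ℤ → ℝ) (s : ℝ) :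
    ∑' j : ℤ, g j * hat 1 (j - s) = (1 - fract s) * g ⌊s⌋ + fract s * g (⌊s⌋ + 1) := by
  have hsupp : ∀ j ∉ ({⌊s⌋, ⌊s⌋ + 1} : Finset ℤ), g j * hat 1 (j - s) = 0 := by
    intro j hj
    simp only [Finset.mem_insert, Finset.mem_singleton, not_or] at hj
    rw [hat_one_intCast_sub_eq_zero hj.1 hj.2, mul_zero]
  rw [tsum_eq_sum hsupp, Finset.sum_pair (by simp), Int.cast_add, Int.cast_one, hat_one_floor_sub,
    hat_one_floor_add_one_sub]
  ring

theorem two_step_deposition_node_centered_general (hf : ℝ) (hhf : 0 < hf)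
    (m : ℕ) (hc : ℝ) (hhc : hc = (m : ℝ) * hf)
    (Wf Wc : ℝ → ℝ)
    (hWf : ∀ ζ, Wf ζ = max 0 (1 - |ζ| / hf))
    (hWc : ∀ ζ, Wc ζ = max 0 (1 - |ζ| / hc))
    (k : ℤ) (xp : ℝ) :
    ∑' j : ℤ, Wc ((k : ℝ) * hc - (j : ℝ) * hf) * Wf ((j : ℝ) * hf - xp)
      = Wc ((k : ℝ) * hc - xp) := by
  obtain rfl : Wf = hat hf := funext hWf
  obtain rfl : Wc = hat hc := funext hWc
  subst hhc
  set s := xp / hf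
  have hxp : xp = s * hf := (div_mul_cancel₀ xp hhf.ne').symm
  have hfine (j : ℤ) : hat hf (j * hf - xp) = hat 1 (j - s) := by
    rw [hxp, ← sub_mul, ← hat_mul_mul hhf 1, one_mul]
  have hcoarse (y : ℝ) : hat (m * hf) (k * (m * hf) - y * hf) = hat m (k * m - y) := by
    rw [show k * (m * hf) - y * hf = (k * m - y) * hf by ring, hat_mul_mul hhf]
  have hinterp := hat_natCast_intCast_sub m (k * m - ⌊s⌋) (fract_nonneg s) (fract_lt_one s).le
  push_cast at hinterp
  calc ∑' j : ℤ, hat (m * hf) (k * (m * hf) - j * hf) * hat hf (j * hf - xp)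
      = ∑' j : ℤ, hat m (k * m - j) * hat 1 (j - s) := by simp only [hfine, hcoarse]
    _ = (1 - fract s) * hat m (k * m - ⌊s⌋) + fract s * hat m (k * m - (⌊s⌋ + 1)) := by
      simpa using tsum_mul_hat_one_intCast_sub (fun j ↦ hat m (k * m - j)) s
    _ = hat m (k * m - s) := by
      rw [sub_add_eq_sub_sub, ← hinterp, sub_sub, Int.floor_add_fract]
    _ = hat (m * hf) (k * (m * hf) - xp) := by rw [hxp, hcoarse]

/-- Node-centered equivalence of two-step and direct deposition: with `h_c = m·h_f`,
hat functions `W_f`, `W_c` of widths `h_f`, `h_c`, fine grid points `x̃_j = j·h_f` and a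
coarse grid point `x_k = k·h_c`, for any particle position `x_p`,
`∑_{j ∈ ℤ} W_c(x_k - x̃_j)·W_f(x̃_j - x_p) = W_c(x_k - x_p)`. -/
theorem two_step_deposition_node_centered (hf : ℝ) (hhf : 0 < hf)
    (m : ℕ) (hm : 0 < m) (hc : ℝ) (hhc : hc = (m : ℝ) * hf)
    (Wf Wc : ℝ → ℝ)
    (hWf : ∀ ζ, Wf ζ = max 0 (1 - |ζ| / hf))
    (hWc : ∀ ζ, Wc ζ = max 0 (1 - |ζ| / hc))
    (k : ℤ) (xp : ℝ) :
    ∑' j : ℤ, Wc ((k : ℝ) * hc - (j : ℝ) * hf) * Wf ((j : ℝ) * hf - xp)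
      = Wc ((k : ℝ) * hc - xp) :=
  two_step_deposition_node_centered_general hf hhf m hc hhc Wf Wc hWf hWc k xp
end

section
/- The midpoint rule is exact for the hat function over a cell-centered fine grid: with cell centers x̃_j = (j + 1/2)·h_f for j ∈ ℤ and h_c = m·h_f (m ∈ ℕ⁺), one has h_f·∑_{j ∈ ℤ} W_c(x_k - x̃_j) = ∫ W_c(x_k - x̃) dx̃ = h_c for every x_k ∈ ℝ with x_k a multiple of h_c. -/
open MeasureTheory intervalIntegral

lemma hat_cont (hc : ℝ) : Continuous (fun x : ℝ => max 0 (1 - |x| / hc)) := by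
  apply continuous_const.max
  exact continuous_const.sub ((continuous_abs).div_const hc)

lemma hat_integral (hc : ℝ) (hpos : 0 < hc) (c : ℝ) :
    ∫ x : ℝ, max 0 (1 - |c - x| / hc) = hc := by
  have hle : c - hc ≤ c + hc := by linarith
  have h0 : ∀ x ∉ Set.Ioc (c - hc) (c + hc), max 0 (1 - |c - x| / hc) = 0 := by
    intro x hx
    simp only [Set.mem_Ioc, not_and_or, not_lt, not_le] at hx
    have habs : hc ≤ |c - x| := by
      rcases hx with h | h
      · rw [abs_of_nonneg (by linarith)]; linarith
      · rw [abs_of_nonpos (by linarith)]; linarith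
    have : 1 - |c - x| / hc ≤ 0 := by
      rw [sub_nonpos, le_div_iff₀ hpos]; linarith
    exact max_eq_left this
  rw [← setIntegral_eq_integral_of_forall_compl_eq_zero h0,
    ← intervalIntegral.integral_of_le hle,
    intervalIntegral.integral_comp_sub_left (fun y => max 0 (1 - |y| / hc)) c]
  have e1 : c - (c + hc) = -hc := by ring
  have e2 : c - (c - hc) = hc := by ring
  rw [e1, e2]
  have hi : ∀ a b : ℝ, IntervalIntegrable (fun x : ℝ => max 0 (1 - |x| / hc)) volume a b :=
    fun a b => (hat_cont hc).intervalIntegrable a b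
  rw [← intervalIntegral.integral_add_adjacent_intervals (hi (-hc) 0) (hi 0 hc)]
  have hL : ∫ x in (-hc)..0, max 0 (1 - |x| / hc) = ∫ x in (-hc)..0, (1 + x / hc) := by
    apply intervalIntegral.integral_congr
    intro x hx
    rw [Set.uIcc_of_le (by linarith)] at hx
    obtain ⟨h1, h2⟩ := hx
    dsimp only
    rw [abs_of_nonpos h2, max_eq_right]
    · ring
    · have : -x / hc ≤ 1 := by rw [div_le_one hpos]; linarith
      linarith
  have hR : ∫ x in (0:ℝ)..hc, max 0 (1 - |x| / hc) = ∫ x in (0:ℝ)..hc, (1 - x / hc) := by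
    apply intervalIntegral.integral_congr
    intro x hx
    rw [Set.uIcc_of_le (by linarith)] at hx
    obtain ⟨h1, h2⟩ := hx
    dsimp only
    rw [abs_of_nonneg h1, max_eq_right]
    have : x / hc ≤ 1 := by rw [div_le_one hpos]; linarith
    linarith
  rw [hL, hR]
  have c1 : IntervalIntegrable (fun _ : ℝ => (1:ℝ)) volume (-hc) 0 := intervalIntegrable_const
  have cid : ∀ a b : ℝ, IntervalIntegrable (fun x : ℝ => x / hc) volume a b :=
    fun a b => (continuous_id.div_const hc).intervalIntegrable a b
  rw [intervalIntegral.integral_add c1 (cid _ _),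
    intervalIntegral.integral_sub intervalIntegrable_const (cid _ _)]
  simp only [intervalIntegral.integral_const, intervalIntegral.integral_div,
    integral_id, smul_eq_mul]
  field_simp
  ring

lemma abs_sum_half (m : ℕ) :
    ∑ i ∈ Finset.Icc (1 - (m:ℤ)) (m:ℤ), |(i:ℝ) - 1/2| = (m:ℝ)^2 := by
  induction m with
  | zero => simp
  | succ n ih =>
    have hset : Finset.Icc (1 - ((n:ℤ)+1)) ((n:ℤ)+1)
        = insert (-(n:ℤ)) (insert ((n:ℤ)+1) (Finset.Icc (1 - (n:ℤ)) (n:ℤ))) := by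
      ext x
      simp only [Finset.mem_Icc, Finset.mem_insert]
      omega
    push_cast
    rw [hset, Finset.sum_insert (by simp only [Finset.mem_insert, Finset.mem_Icc]; omega),
      Finset.sum_insert (by simp only [Finset.mem_Icc]; omega)]
    push_cast at ih ⊢
    rw [ih, abs_of_nonpos (by linarith [Nat.cast_nonneg (α := ℝ) n]),
      abs_of_nonneg (by linarith [Nat.cast_nonneg (α := ℝ) n])]
    ring

lemma hat_sum (m : ℕ) (hm : 0 < m) :
    ∑' i : ℤ, max 0 (1 - |(i:ℝ) - 1/2| / (m:ℝ)) = (m:ℝ) := by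
  have hm' : (0:ℝ) < m := by exact_mod_cast hm
  rw [tsum_eq_sum (s := Finset.Icc (1 - (m:ℤ)) (m:ℤ)) ?_]
  · have hcongr : ∀ i ∈ Finset.Icc (1 - (m:ℤ)) (m:ℤ),
        max 0 (1 - |(i:ℝ) - 1/2| / (m:ℝ)) = 1 - |(i:ℝ) - 1/2| / (m:ℝ) := by
      intro i hi
      simp only [Finset.mem_Icc] at hi
      apply max_eq_right
      have h1 : |(i:ℝ) - 1/2| ≤ (m:ℝ) := by
        rw [abs_le]
        constructor
        · have : (1:ℝ) - (m:ℝ) ≤ (i:ℝ) := by exact_mod_cast hi.1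
          linarith
        · have : (i:ℝ) ≤ (m:ℝ) := by exact_mod_cast hi.2
          linarith
      have := (div_le_one hm').mpr h1
      linarith
    rw [Finset.sum_congr rfl hcongr, Finset.sum_sub_distrib, Finset.sum_const,
      ← Finset.sum_div, abs_sum_half]
    have hcard : (Finset.Icc (1 - (m:ℤ)) (m:ℤ)).card = 2 * m := by
      rw [Int.card_Icc]
      omega
    rw [hcard]
    field_simp
    ring
  · intro i hi
    simp only [Finset.mem_Icc, not_and_or, not_le] at hi
    apply max_eq_left
    have h1 : (m:ℝ) ≤ |(i:ℝ) - 1/2| := by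
      rcases hi with h | h
      · have : (i:ℝ) ≤ -(m:ℝ) := by exact_mod_cast (by omega : i ≤ -(m:ℤ))
        rw [abs_of_nonpos (by linarith)]
        linarith
      · have : (m:ℝ) + 1 ≤ (i:ℝ) := by exact_mod_cast (by omega : (m:ℤ) + 1 ≤ i)
        rw [abs_of_nonneg (by linarith)]
        linarith
    have := (one_le_div hm').mpr h1
    linarith

/-- Midpoint rule exactness for the hat function over a cell-centered fine grid: with cell
centers `x̃_j = (j + 1/2)·h_f`, `h_c = m·h_f` and `x_k = k·h_c`,
`h_f·∑_{j ∈ ℤ} W_c(x_k - x̃_j) = ∫ W_c(x_k - x̃) dx̃ = h_c`. -/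
theorem midpoint_rule_exact_hat (hf : ℝ) (hhf : 0 < hf)
    (m : ℕ) (hm : 0 < m) (hc : ℝ) (hhc : hc = (m : ℝ) * hf)
    (Wc : ℝ → ℝ) (hWc : ∀ ζ, Wc ζ = max 0 (1 - |ζ| / hc))
    (k : ℤ) :
    hf * ∑' j : ℤ, Wc ((k : ℝ) * hc - ((j : ℝ) + 1 / 2) * hf)
        = ∫ x : ℝ, Wc ((k : ℝ) * hc - x) ∧
    hf * ∑' j : ℤ, Wc ((k : ℝ) * hc - ((j : ℝ) + 1 / 2) * hf) = hc := by
  have hm' : (0:ℝ) < m := by exact_mod_cast hm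
  have hcpos : 0 < hc := by rw [hhc]; positivity
  have key : ∀ i : ℤ,
      Wc ((k : ℝ) * hc - (((k * (m:ℤ) - i : ℤ) : ℝ) + 1 / 2) * hf)
        = max 0 (1 - |(i:ℝ) - 1/2| / (m:ℝ)) := by
    intro i
    have harg : (k : ℝ) * hc - (((k * (m:ℤ) - i : ℤ) : ℝ) + 1 / 2) * hf
        = ((i:ℝ) - 1/2) * hf := by
      push_cast
      rw [hhc]
      ring
    rw [hWc, harg, abs_mul, abs_of_pos hhf, hhc,
      mul_div_mul_right _ _ (ne_of_gt hhf)]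
  have hsum : ∑' j : ℤ, Wc ((k : ℝ) * hc - ((j : ℝ) + 1 / 2) * hf) = (m:ℝ) := by
    rw [← Equiv.tsum_eq (Equiv.subLeft (k * (m:ℤ)))
      (fun j : ℤ => Wc ((k : ℝ) * hc - ((j : ℝ) + 1 / 2) * hf))]
    simp only [Equiv.subLeft_apply]
    rw [tsum_congr key, hat_sum m hm]
  have hS : hf * ∑' j : ℤ, Wc ((k : ℝ) * hc - ((j : ℝ) + 1 / 2) * hf) = hc := by
    rw [hsum, hhc, mul_comm]
  have hI : ∫ x : ℝ, Wc ((k : ℝ) * hc - x) = hc := by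
    simp only [hWc]
    exact hat_integral hc hcpos ((k:ℝ) * hc)
  exact ⟨hS.trans hI.symm, hS⟩
end

section
/- Under the assumptions of the 2D truncated combination error expansion, if ‖C₁(h)‖ ≤ κ₁, ‖C₂(h)‖ ≤ κ₂ for all h, and ‖D(h_i, h_j)‖ ≤ β for all h_i, h_j, then the combined grid-based error is bounded by h_n²·(κ₁ + κ₂ + β·L²·2^{-2τ}·(5(n - τ) + 1)). -/
/-!
In the difference of the two diagonal sums, the one-dimensional error terms `C₁(h_i) h_i²` and
`C₂(h_j) h_j²` telescope (after reflecting the index of the second one), leaving only their values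
on the finest grid `h_n`. Each mixed term `D(h_i, h_j) h_i² h_j²` depends on the grid only through
`h_i h_j = L² / 2^(i+j)`, so it is at most `β L⁴ / 4^(n+τ)` on the diagonal `i + j = n + τ` and
four times that on the diagonal `i + j = n + τ - 1`; counting the grids gives `5(n - τ) + 1`.
-/

open Finset

namespace Finset

theorem sum_Icc_reflect {M : Type*} [AddCommMonoid M] (f : ℕ → M) (a b : ℕ) :
    ∑ i ∈ Icc a b, f (a + b - i) = ∑ i ∈ Icc a b, f i := by
  refine sum_nbij' (fun i => a + b - i) (fun i => a + b - i) ?_ ?_ ?_ ?_ ?_ <;>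
    intro i hi <;> simp only [mem_Icc] at hi ⊢ <;> first | rfl | omega

theorem abs_sum_le_card_mul {ι : Type*} (s : Finset ι) (f : ι → ℝ) {M : ℝ}
    (hf : ∀ i ∈ s, |f i| ≤ M) : |∑ i ∈ s, f i| ≤ #s * M :=
  (abs_sum_le_sum_abs f s).trans (by simpa using sum_le_card_nsmul s _ M hf)

end Finset

theorem combination_sum_sub_eq {M : Type*} [AddCommGroup M] (f g : ℕ → M) (d : ℕ → ℕ → M)
    {n τ : ℕ} (hτ : τ ≤ n) (hn : n ≠ 0) :
    (∑ i ∈ Icc τ n, (f i + g (n + τ - i) + d i (n + τ - i))) -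
        ∑ i ∈ Icc τ (n - 1), (f i + g (n + τ - 1 - i) + d i (n + τ - 1 - i)) =
      f n + g n + ((∑ i ∈ Icc τ n, d i (n + τ - i)) - ∑ i ∈ Icc τ (n - 1), d i (n + τ - 1 - i)) := by
  have htop : ∀ u : ℕ → M, ∑ i ∈ Icc τ n, u i = ∑ i ∈ Icc τ (n - 1), u i + u n := fun u => by
    have := sum_Icc_succ_top (show τ ≤ n - 1 + 1 by omega) u
    rwa [Nat.sub_add_cancel (Nat.one_le_iff_ne_zero.mpr hn)] at this
  have hg : ∑ i ∈ Icc τ n, g (n + τ - i) = ∑ i ∈ Icc τ n, g i := by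
    rw [add_comm n τ, sum_Icc_reflect g τ n]
  have hg' : ∑ i ∈ Icc τ (n - 1), g (n + τ - 1 - i) = ∑ i ∈ Icc τ (n - 1), g i := by
    rw [show n + τ - 1 = τ + (n - 1) by omega, sum_Icc_reflect g τ (n - 1)]
  simp only [sum_add_distrib, hg, hg', htop f, htop g]
  abel

theorem sq_div_two_pow_mul_sq_div_two_pow (L : ℝ) (i j : ℕ) :
    (L / 2 ^ i) ^ 2 * (L / 2 ^ j) ^ 2 = L ^ 4 / 4 ^ (i + j) := by
  rw [pow_add, show (4 : ℝ) = 2 ^ 2 by norm_num, ← pow_mul, ← pow_mul]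
  field_simp
  ring

theorem abs_mul_le_mul_of_nonneg {a κ x : ℝ} (ha : |a| ≤ κ) (hx : 0 ≤ x) : |a * x| ≤ κ * x := by
  rw [abs_mul, abs_of_nonneg hx]
  exact mul_le_mul_of_nonneg_right ha hx

theorem abs_mul_sq_div_two_pow_mul_sq_le {a β : ℝ} (ha : |a| ≤ β) (L : ℝ) (i j : ℕ) :
    |a * (L / 2 ^ i) ^ 2 * (L / 2 ^ j) ^ 2| ≤ β * (L ^ 4 / 4 ^ (i + j)) := by
  rw [mul_assoc, ← sq_div_two_pow_mul_sq_div_two_pow]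
  exact abs_mul_le_mul_of_nonneg ha (by positivity)

theorem div_pow_sub_one {x : ℝ} (hx : x ≠ 0) (a : ℝ) {m : ℕ} (hm : m ≠ 0) :
    a / x ^ (m - 1) = x * (a / x ^ m) := by
  obtain ⟨k, rfl⟩ := Nat.exists_eq_add_one_of_ne_zero hm
  rw [Nat.add_sub_cancel, pow_succ]
  field_simp

theorem abs_sum_Icc_antidiagonal_le {d : ℕ → ℕ → ℝ} {M : ℕ → ℝ}
    (hd : ∀ i j, |d i j| ≤ M (i + j)) {a b k : ℕ} (hbk : b ≤ k) :
    |∑ i ∈ Icc a b, d i (k - i)| ≤ (b + 1 - a : ℕ) * M k := by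
  rw [← Nat.card_Icc]
  refine abs_sum_le_card_mul _ _ fun i hi => ?_
  have hik : i + (k - i) = k := Nat.add_sub_cancel' ((mem_Icc.mp hi).2.trans hbk)
  simpa only [hik] using hd i (k - i)

theorem truncated_combination_error_bound_general (L : ℝ) (n τ : ℕ)
    (h1 : 1 ≤ τ) (h2 : τ ≤ n) (C₁ C₂ : ℝ → ℝ) (D : ℝ → ℝ → ℝ)
    (κ₁ κ₂ β : ℝ)
    (hC₁ : ∀ h : ℝ, |C₁ h| ≤ κ₁) (hC₂ : ∀ h : ℝ, |C₂ h| ≤ κ₂)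
    (hD : ∀ hi hj : ℝ, |D hi hj| ≤ β) :
    let h : ℕ → ℝ := fun m => L / 2 ^ m
    let E : ℕ → ℕ → ℝ := fun i j =>
      C₁ (h i) * (h i) ^ 2 + C₂ (h j) * (h j) ^ 2 + D (h i) (h j) * (h i) ^ 2 * (h j) ^ 2
    |(∑ i ∈ Finset.Icc τ n, E i (n + τ - i)) -
        ∑ i ∈ Finset.Icc τ (n - 1), E i (n + τ - 1 - i)| ≤
      (h n) ^ 2 * (κ₁ + κ₂ + β * L ^ 2 / 2 ^ (2 * τ) * (5 * ((n : ℝ) - τ) + 1)) := by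
  intro h E
  let d : ℕ → ℕ → ℝ := fun i j => D (h i) (h j) * h i ^ 2 * h j ^ 2
  have hd : ∀ i j, |d i j| ≤ β * (L ^ 4 / 4 ^ (i + j)) := fun i j =>
    abs_mul_sq_div_two_pow_mul_sq_le (hD _ _) L i j
  have hfine := abs_sum_Icc_antidiagonal_le (M := fun m => β * (L ^ 4 / 4 ^ m)) hd
    (a := τ) (k := n + τ) le_self_add
  have hcoarse := abs_sum_Icc_antidiagonal_le (M := fun m => β * (L ^ 4 / 4 ^ m)) hd
    (a := τ) (b := n - 1) (k := n + τ - 1) (by omega)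
  rw [Nat.cast_sub (by omega)] at hfine
  rw [Nat.sub_add_cancel (by omega), Nat.cast_sub h2,
    div_pow_sub_one four_ne_zero _ (by omega)] at hcoarse
  calc _ = |C₁ (h n) * h n ^ 2 + C₂ (h n) * h n ^ 2 +
          ((∑ i ∈ Icc τ n, d i (n + τ - i)) - ∑ i ∈ Icc τ (n - 1), d i (n + τ - 1 - i))| :=
        congrArg abs <| combination_sum_sub_eq (fun i => C₁ (h i) * h i ^ 2)
          (fun j => C₂ (h j) * h j ^ 2) d h2 (by omega)
    _ ≤ κ₁ * h n ^ 2 + κ₂ * h n ^ 2 + (((n + 1 : ℕ) - τ : ℝ) * (β * (L ^ 4 / 4 ^ (n + τ))) +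
          (n - τ) * (β * (4 * (L ^ 4 / 4 ^ (n + τ))))) := by
        grw [abs_add_le, abs_add_le, abs_sub, abs_mul_le_mul_of_nonneg (hC₁ _) (sq_nonneg _),
          abs_mul_le_mul_of_nonneg (hC₂ _) (sq_nonneg _), hfine, hcoarse]
    _ = h n ^ 2 * (κ₁ + κ₂ + β * L ^ 2 / 2 ^ (2 * τ) * (5 * ((n : ℝ) - τ) + 1)) := by
        rw [← sq_div_two_pow_mul_sq_div_two_pow]
        push_cast
        ring

/-- Grid-based error bound for the 2D truncated combination technique: if `|C₁(h)| ≤ κ₁`,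
`|C₂(h)| ≤ κ₂` for all `h` and `|D(h_i, h_j)| ≤ β` for all `h_i, h_j`, then the combined
grid-based error is bounded by `h_n²·(κ₁ + κ₂ + β·L²·2^{-2τ}·(5(n-τ)+1))`. -/
theorem truncated_combination_error_bound (L : ℝ) (hL : 0 < L) (n τ : ℕ)
    (h1 : 1 ≤ τ) (h2 : τ ≤ n) (C₁ C₂ : ℝ → ℝ) (D : ℝ → ℝ → ℝ)
    (κ₁ κ₂ β : ℝ)
    (hC₁ : ∀ h : ℝ, |C₁ h| ≤ κ₁) (hC₂ : ∀ h : ℝ, |C₂ h| ≤ κ₂)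
    (hD : ∀ hi hj : ℝ, |D hi hj| ≤ β) :
    let h : ℕ → ℝ := fun m => L / 2 ^ m
    let E : ℕ → ℕ → ℝ := fun i j =>
      C₁ (h i) * (h i) ^ 2 + C₂ (h j) * (h j) ^ 2 + D (h i) (h j) * (h i) ^ 2 * (h j) ^ 2
    |(∑ i ∈ Finset.Icc τ n, E i (n + τ - i)) -
        ∑ i ∈ Finset.Icc τ (n - 1), E i (n + τ - 1 - i)| ≤
      (h n) ^ 2 * (κ₁ + κ₂ + β * L ^ 2 / 2 ^ (2 * τ) * (5 * ((n : ℝ) - τ) + 1)) :=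
  truncated_combination_error_bound_general L n τ h1 h2 C₁ C₂ D κ₁ κ₂ β hC₁ hC₂ hD
end
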